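/- For every τ > 0 and x ∈ ℝ, v is twice differentiable in τ at (τ,x) and satisfies the Black–Scholes greek relation ∂²_τ v(τ,x) = (−1/(2τ) + x²/(2τ²) − 1/8) · ∂_τ v(τ,x). -/

import Mathlib

open MeasureTheory

/-- Standard normal cumulative distribution function. -/
noncomputable def stdN (y : ℝ) : ℝ :=
  ∫ u in Set.Iio y, Real.exp (-u ^ 2 / 2) / Real.sqrt (2 * Real.pi)

/-- Standard normal density. -/
noncomputable def stdn (y : ℝ) : ℝ :=
  Real.exp (-y ^ 2 / 2) / Real.sqrt (2 * Real.pi)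

/-- Unit-volatility Black–Scholes price in reduced variables. -/
noncomputable def bsv (τ x : ℝ) : ℝ :=
  Real.exp x * stdN (x / Real.sqrt τ + Real.sqrt τ / 2) -
    stdN (x / Real.sqrt τ - Real.sqrt τ / 2)

/-!
With `d(t) = x/√t - √t/2`, the identity `eˣ n(d + √t) = n(d)` makes the two chain-rule terms
of `∂_τ v` collapse to `∂_τ v = n(d)/(2√τ)`. Differentiating once more gives
`∂²_τ v = (-d d' - 1/(2τ)) ∂_τ v`, and `-d d' = x²/(2τ²) - 1/8`.
-/

open Real Filter Topology

lemma integrable_stdn : Integrable stdn := by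
  have h := (integrable_exp_neg_mul_sq (b := (1 : ℝ) / 2) (by norm_num)).div_const
    (√(2 * π))
  refine h.congr (ae_of_all _ fun u => ?_)
  simp only [stdn]
  ring_nf

lemma continuous_stdn : Continuous stdn := by
  unfold stdn
  fun_prop

lemma hasDerivAt_integral_Iio {f : ℝ → ℝ} (hf : Integrable f) (hfc : Continuous f) (y : ℝ) :
    HasDerivAt (fun z => ∫ u in Set.Iio z, f u) (f y) y := by
  have hshift : ∀ z, ∫ u in Set.Iio z, f u = (∫ u in Set.Iic 0, f u) + ∫ u in (0 : ℝ)..z, f u :=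
    fun z => by
      rw [setIntegral_congr_set Iio_ae_eq_Iic,
        ← intervalIntegral.integral_Iic_sub_Iic hf.integrableOn hf.integrableOn]
      ring
  have hFTC : HasDerivAt (fun z => (∫ u in Set.Iic 0, f u) + ∫ u in (0 : ℝ)..z, f u) (f y) y :=
    (intervalIntegral.integral_hasDerivAt_right hf.intervalIntegrable
      (hfc.stronglyMeasurableAtFilter _ _) hfc.continuousAt).const_add _
  exact hFTC.congr_of_eventuallyEq (Eventually.of_forall hshift)

lemma hasDerivAt_stdN (y : ℝ) : HasDerivAt stdN (stdn y) y :=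
  hasDerivAt_integral_Iio integrable_stdn continuous_stdn y

lemma hasDerivAt_stdn (y : ℝ) : HasDerivAt stdn (-y * stdn y) y := by
  have h : HasDerivAt (fun y : ℝ => -y ^ 2 / 2) (-y) y :=
    ((hasDerivAt_pow 2 y).neg.div_const 2).congr_deriv (by norm_num; ring)
  exact (h.exp.div_const _).congr_deriv (by unfold stdn; ring)

lemma stdn_add (d s : ℝ) : stdn (d + s) = stdn d * exp (-(d * s) - s ^ 2 / 2) := by
  simp only [stdn, div_mul_eq_mul_div, ← exp_add]
  ring_nf

lemma hasDerivAt_div_sqrt_sub_sqrt_div_two (x : ℝ) {t : ℝ} (ht : 0 < t) :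
    HasDerivAt (fun u => x / √u - √u / 2) (-(x / (2 * t * √t)) - 1 / (4 * √t)) t := by
  have hs : HasDerivAt sqrt (1 / (2 * √t)) t := hasDerivAt_sqrt ht.ne'
  have hs0 : √t ≠ 0 := (sqrt_pos.mpr ht).ne'
  refine (((hasDerivAt_const t x).div hs hs0).sub (hs.div_const 2)).congr_deriv ?_
  rw [sq_sqrt ht.le]
  field_simp
  ring

lemma div_sqrt_sub_sqrt_div_two_mul_deriv (x : ℝ) {t : ℝ} (ht : 0 < t) :
    (x / √t - √t / 2) * (-(x / (2 * t * √t)) - 1 / (4 * √t)) = 1 / 8 - x ^ 2 / (2 * t ^ 2) := by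
  obtain ⟨s, hs, rfl⟩ : ∃ s, 0 < s ∧ t = s ^ 2 := ⟨√t, sqrt_pos.mpr ht, (sq_sqrt ht.le).symm⟩
  rw [sqrt_sq hs.le]
  field_simp
  ring

lemma hasDerivAt_bsv_tau (x : ℝ) {t : ℝ} (ht : 0 < t) :
    HasDerivAt (fun u => bsv u x) (stdn (x / √t - √t / 2) / (2 * √t)) t := by
  have hd := hasDerivAt_div_sqrt_sub_sqrt_div_two x ht
  have hdp : HasDerivAt (fun u => x / √u - √u / 2 + √u)
      (-(x / (2 * t * √t)) - 1 / (4 * √t) + 1 / (2 * √t)) t :=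
    hd.add (hasDerivAt_sqrt ht.ne')
  have hv : (fun u => bsv u x) =
      fun u => exp x * stdN ((x / √u - √u / 2) + √u) - stdN (x / √u - √u / 2) := by
    ext u
    simp only [bsv]
    ring_nf
  have hkey : exp x * stdn ((x / √t - √t / 2) + √t) = stdn (x / √t - √t / 2) := by
    have hexp : x + (-((x / √t - √t / 2) * √t) - √t ^ 2 / 2) = 0 := by
      field_simp
      ring
    rw [stdn_add, mul_left_comm, ← exp_add, hexp, exp_zero, mul_one]
  rw [hv]
  refine ((((hasDerivAt_stdN _).comp t hdp).const_mul (exp x)).sub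
    ((hasDerivAt_stdN _).comp t hd)).congr_deriv ?_
  rw [← mul_assoc, hkey]
  field_simp
  ring

lemma hasDerivAt_stdn_comp_div_two_sqrt {d : ℝ → ℝ} {d' t : ℝ} (hd : HasDerivAt d d' t)
    (ht : 0 < t) :
    HasDerivAt (fun u => stdn (d u) / (2 * √u))
      ((-(d t * d') - 1 / (2 * t)) * (stdn (d t) / (2 * √t))) t := by
  refine (((hasDerivAt_stdn _).comp t hd).div ((hasDerivAt_sqrt ht.ne').const_mul 2)
    (by positivity)).congr_deriv ?_
  rw [Function.comp_apply]
  field_simp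
  rw [sq_sqrt ht.le]
  ring

/-- Black–Scholes greek relation `∂²_τ v(τ,x) = (−1/(2τ) + x²/(2τ²) − 1/8) ∂_τ v(τ,x)`. -/
theorem bsv_second_deriv_tau (τ x : ℝ) (hτ : 0 < τ) :
    ∃ vτ vττ : ℝ,
      HasDerivAt (fun t => bsv t x) vτ τ ∧
      HasDerivAt (fun t => deriv (fun s => bsv s x) t) vττ τ ∧
      vττ = (-(1 / (2 * τ)) + x ^ 2 / (2 * τ ^ 2) - 1 / 8) * vτ := by
  have hderiv : (fun t => deriv (fun s => bsv s x) t)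
      =ᶠ[𝓝 τ] fun t => stdn (x / √t - √t / 2) / (2 * √t) := by
    filter_upwards [lt_mem_nhds hτ] with t ht
    exact (hasDerivAt_bsv_tau x ht).deriv
  refine ⟨_, _, hasDerivAt_bsv_tau x hτ,
    (hasDerivAt_stdn_comp_div_two_sqrt (hasDerivAt_div_sqrt_sub_sqrt_div_two x hτ) hτ)
      |>.congr_of_eventuallyEq hderiv, ?_⟩
  rw [div_sqrt_sub_sqrt_div_two_mul_deriv x hτ]
  ring
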